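/- The optimal value of the following semidefinite program equals 3/4: maximize ⟨τ, Q^{BC} + Q^{OT}⟩ over density matrices τ on C ⊗ Y ⊗ A ⊗ G = ℂ² ⊗ ℂ² ⊗ ℂ³ ⊗ ℂ², subject to Tr_{C,G}(τ) = Tr_B(|ψ⟩⟨ψ|), where |ψ⟩ = Σ_{y∈{0,1}} (1/√2)|y⟩_Y ⊗ |φ_y⟩_{A⊗B}, Q^{BC} = |0⟩⟨0|_C ⊗ Σ_{y∈{0,1}} |y⟩⟨y|_Y ⊗ 1_A ⊗ |y⟩⟨y|_G, and Q^{OT} = |1⟩⟨1|_C ⊗ Σ_{y∈{0,1}} |y⟩⟨y|_Y ⊗ 1_A ⊗ |y⟩⟨y|_G. (This is the optimal cheating probability for Bob in the stochastic bit-commitment/oblivious-transfer switch protocol, where Bob may choose the subtask c adaptively.) -/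

import Mathlib

/-! STATEMENT 6: Bob's optimal cheating probability in the stochastic bit-commitment / oblivious-transfer switch protocol equals 3/4. -/

open Matrix
open scoped Matrix BigOperators ComplexOrder

noncomputable section

/-- Square matrices over ℂ indexed by `α`. -/
abbrev Mat (α : Type) : Type := Matrix α α ℂ

/-- A density matrix: positive semidefinite with unit trace. -/
def IsDensity {α : Type} [Fintype α] [DecidableEq α] (ρ : Mat α) : Prop :=
  ρ.PosSemidef ∧ ρ.trace = 1

/-- Hilbert–Schmidt inner product ⟨P, Q⟩ = Tr(P† Q). -/
def hs {α : Type} [Fintype α] (P Q : Mat α) : ℂ := (Pᴴ * Q).trace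

/-- Outer product |v⟩⟨v|. -/
def outer {α : Type} (v : α → ℂ) : Mat α := fun i j => v i * star (v j)

/-- Standard basis vector |i⟩. -/
def ket {α : Type} [DecidableEq α] (i : α) : α → ℂ := fun j => if j = i then 1 else 0

/-- The embedding of Fin 2 into Fin 3. -/
def f23 (y : Fin 2) : Fin 3 := ⟨y.val, by omega⟩

/-- |φ_y⟩ = (|yy⟩ + |22⟩)/√2 ∈ ℂ³ ⊗ ℂ³. -/
def phi (y : Fin 2) : Fin 3 × Fin 3 → ℂ :=
  fun p => (ket (f23 y, f23 y) p + ket ((2 : Fin 3), (2 : Fin 3)) p) / (Real.sqrt 2 : ℂ)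

/-- Partial trace over the first tensor factor. -/
def ptrA {α β : Type} [Fintype α] (ρ : Mat (α × β)) : Mat β :=
  fun b b' => ∑ a, ρ (a, b) (a, b')

/-- |ψ⟩ = Σ_y (1/√2)|y⟩_Y ⊗ |φ_y⟩_{A⊗B}. -/
def psiBC : Fin 2 × Fin 3 × Fin 3 → ℂ :=
  fun p => phi p.1 (p.2.1, p.2.2) / (Real.sqrt 2 : ℂ)

/-- Partial trace over B, the last qutrit factor of Y ⊗ A ⊗ B. -/
def trB_psi (ρ : Mat (Fin 2 × Fin 3 × Fin 3)) : Mat (Fin 2 × Fin 3) :=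
  fun p q => ∑ b, ρ (p.1, p.2, b) (q.1, q.2, b)

/-- Partial trace over C and G, the outer factors of C ⊗ Y ⊗ A ⊗ G. -/
def trCG (τ : Mat (Fin 2 × Fin 2 × Fin 3 × Fin 2)) : Mat (Fin 2 × Fin 3) :=
  fun p q => ∑ c, ∑ g, τ (c, p.1, p.2, g) (c, q.1, q.2, g)

/-- Q^{BC} = |0⟩⟨0|_C ⊗ Σ_y |y⟩⟨y|_Y ⊗ 1_A ⊗ |y⟩⟨y|_G. -/
def QBC : Mat (Fin 2 × Fin 2 × Fin 3 × Fin 2) := fun p q =>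
  match p, q with
  | (c, y, a, g), (c', y', a', g') =>
    ket (0 : Fin 2) c * star (ket (0 : Fin 2) c') *
      (∑ u : Fin 2, ket u y * star (ket u y') *
        (if a = a' then 1 else 0) * (ket u g * star (ket u g')))

/-- Q^{OT} = |1⟩⟨1|_C ⊗ Σ_y |y⟩⟨y|_Y ⊗ 1_A ⊗ |y⟩⟨y|_G. -/
def QOT : Mat (Fin 2 × Fin 2 × Fin 3 × Fin 2) := fun p q =>
  match p, q with
  | (c, y, a, g), (c', y', a', g') =>
    ket (1 : Fin 2) c * star (ket (1 : Fin 2) c') *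
      (∑ u : Fin 2, ket u y * star (ket u y') *
        (if a = a' then 1 else 0) * (ket u g * star (ket u g')))

/-! Restricting τ to fixed values (c, g) of the registers C and G gives positive semidefinite
slices σ_{cg} on Y ⊗ A that sum to ρ = Tr_B |ψ⟩⟨ψ|, and the objective becomes
Σ_{c,g} Tr((|g⟩⟨g| ⊗ 1) σ_{cg}). The dual of this program has no optimal solution, so instead of a
dual certificate we use the kernel of ρ: it contains w = |0,2⟩ - |1,2⟩, hence so does the kernel of
every σ_{cg}, which forces ⟨0,2|σ_{cg}|0,2⟩ = ⟨1,2|σ_{cg}|1,2⟩. Therefore each slice contributes at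
most Σ_p λ(p) ⟨p|σ_{cg}|p⟩, where λ is 1/2 on A = 2 and 1 elsewhere, and these sum to the value
3/4 of the same functional on ρ. The value 3/4 is attained by always opening c = 0 and guessing
g = a for a ∈ {0, 1} and g = 0 for a = 2. -/

section

variable {α : Type*} [Fintype α]

theorem Matrix.PosSemidef.mulVec_eq_zero_of_sum_mulVec_eq_zero {𝕜 ι : Type*} [RCLike 𝕜]
    [Fintype ι] {σ : ι → Matrix α α 𝕜} (hσ : ∀ i, (σ i).PosSemidef) {w : α → 𝕜}
    (hw : (∑ i, σ i) *ᵥ w = 0) (i : ι) : σ i *ᵥ w = 0 := by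
  have hsum : ∑ i, star w ⬝ᵥ σ i *ᵥ w = 0 := by
    rw [← dotProduct_sum, ← sum_mulVec, hw, dotProduct_zero]
  rw [Finset.sum_eq_zero_iff_of_nonneg fun i _ => (hσ i).dotProduct_mulVec_nonneg w] at hsum
  exact ((hσ i).dotProduct_mulVec_zero_iff w).mp (hsum i (Finset.mem_univ i))

theorem Matrix.IsHermitian.apply_eq_of_mulVec_single_sub_single_eq_zero {R : Type*} [Ring R]
    [StarRing R] [DecidableEq α] {A : Matrix α α R} (hA : A.IsHermitian) {i j : α}
    (h : A *ᵥ (Pi.single i 1 - Pi.single j 1) = 0) : A i i = A j j := by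
  have hi := congrFun h i
  have hj := congrFun h j
  simp only [mulVec_sub, mulVec_single_one, Pi.sub_apply, col_apply, Pi.zero_apply,
    sub_eq_zero] at hi hj
  rw [← hj, ← hA.apply j i, ← hi, hA.apply i i]

end

theorem hs_diagonal {α : Type} [Fintype α] [DecidableEq α] (A : Mat α) (d : α → ℂ) :
    hs A (diagonal d) = ∑ i, star (A i i) * d i := by
  simp [hs, Matrix.trace, mul_diagonal]

def splitCG : (Fin 2 × Fin 2) × (Fin 2 × Fin 3) ≃ Fin 2 × Fin 2 × Fin 3 × Fin 2 where
  toFun x := (x.1.1, x.2.1, x.2.2, x.1.2)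
  invFun i := ((i.1, i.2.2.2), (i.2.1, i.2.2.1))
  left_inv _ := rfl
  right_inv _ := rfl

def slice (k : Fin 2 × Fin 2) (τ : Mat (Fin 2 × Fin 2 × Fin 3 × Fin 2)) : Mat (Fin 2 × Fin 3) :=
  τ.submatrix (fun p => splitCG (k, p)) (fun p => splitCG (k, p))

theorem trCG_eq_sum_slice (τ : Mat (Fin 2 × Fin 2 × Fin 3 × Fin 2)) :
    trCG τ = ∑ k, slice k τ := by
  ext p q
  simp [trCG, slice, splitCG, Matrix.sum_apply, Fintype.sum_prod_type]

theorem sum_eq_sum_splitCG {M : Type} [AddCommMonoid M] (f : Fin 2 × Fin 2 × Fin 3 × Fin 2 → M) :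
    ∑ i, f i = ∑ k, ∑ p, f (splitCG (k, p)) := by
  rw [← Fintype.sum_prod_type']
  exact (Fintype.sum_equiv splitCG _ _ fun _ => rfl).symm

theorem QBC_add_QOT : QBC + QOT = diagonal fun i => if i.2.1 = i.2.2.2 then 1 else 0 := by
  ext ⟨c, y, a, g⟩ ⟨c', y', a', g'⟩
  fin_cases c <;> fin_cases c' <;> fin_cases y <;> fin_cases y' <;> fin_cases g <;> fin_cases g' <;>
    by_cases ha : a = a' <;> simp [QBC, QOT, ket, diagonal, ha]

theorem re_hs_QBC_add_hs_QOT (τ : Mat (Fin 2 × Fin 2 × Fin 3 × Fin 2)) :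
    (hs τ QBC + hs τ QOT).re = ∑ k, ∑ p, if p.1 = k.2 then (slice k τ p p).re else 0 := by
  have hadd : hs τ QBC + hs τ QOT = hs τ (QBC + QOT) := by
    simp only [hs, Matrix.mul_add, trace_add]
  rw [hadd, QBC_add_QOT, hs_diagonal, Complex.re_sum, sum_eq_sum_splitCG]
  refine Finset.sum_congr rfl fun k _ => Finset.sum_congr rfl fun p _ => ?_
  simp only [splitCG, Equiv.coe_fn_mk, slice, submatrix_apply]
  split_ifs with h <;> simp [h]

def cheatWeight (a : Fin 3) : ℝ := if a = 2 then 1 / 2 else 1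

theorem sum_re_diag_le_cheatWeight {σ : Mat (Fin 2 × Fin 3)} (hσ : σ.PosSemidef)
    (hw : σ *ᵥ (Pi.single (0, 2) 1 - Pi.single (1, 2) 1) = 0) (g : Fin 2) :
    ∑ p, (if p.1 = g then (σ p p).re else 0) ≤ ∑ p, cheatWeight p.2 * (σ p p).re := by
  have hdiag (p) : 0 ≤ (σ p p).re := (Complex.nonneg_iff.mp hσ.diag_nonneg).1
  have h2 : σ (0, 2) (0, 2) = σ (1, 2) (1, 2) :=
    hσ.1.apply_eq_of_mulVec_single_sub_single_eq_zero hw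
  fin_cases g <;>
    simp only [Fintype.sum_prod_type, Fin.sum_univ_two, Fin.sum_univ_three, cheatWeight, h2,
      Fin.zero_eta, Fin.mk_one, Fin.isValue, Fin.reduceEq, reduceIte, ite_mul, one_mul] <;>
    linarith [hdiag (0, 0), hdiag (0, 1), hdiag (1, 0), hdiag (1, 1)]

theorem psiBC_apply (p : Fin 2 × Fin 3 × Fin 3) :
    psiBC p = ((if p.2.1 = f23 p.1 ∧ p.2.2 = f23 p.1 then 1 else 0) +
      (if p.2.1 = 2 ∧ p.2.2 = 2 then (1 : ℂ) else 0)) / 2 := by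
  have h2 : ((Real.sqrt 2 : ℝ) : ℂ) * ((Real.sqrt 2 : ℝ) : ℂ) = 2 := by
    rw [← Complex.ofReal_mul, Real.mul_self_sqrt (by norm_num)]
    norm_num
  simp only [psiBC, phi, ket, div_div, h2, Prod.mk.injEq]

theorem trB_psiBC_mulVec_eq_zero : trB_psi (outer psiBC) *ᵥ (Pi.single (0, 2) 1 - Pi.single (1, 2) 1) = 0 := by
  ext p
  fin_cases p <;> simp [trB_psi, outer, psiBC_apply, mulVec_sub, Fin.sum_univ_three, f23]

theorem trace_trB_psiBC : (trB_psi (outer psiBC)).trace = 1 := by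
  simp [trace, trB_psi, outer, psiBC_apply, Fintype.sum_prod_type, Fin.sum_univ_three, f23]
  norm_num

theorem sum_cheatWeight_mul_trB_psiBC : ∑ p, cheatWeight p.2 * (trB_psi (outer psiBC) p p).re = 3 / 4 := by
  simp [trB_psi, outer, psiBC_apply, cheatWeight, Fintype.sum_prod_type, Fin.sum_univ_three, f23]
  norm_num

theorem trace_trCG (τ : Mat (Fin 2 × Fin 2 × Fin 3 × Fin 2)) : (trCG τ).trace = τ.trace := by
  rw [trCG_eq_sum_slice, trace_sum, trace, sum_eq_sum_splitCG]
  rfl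

theorem re_hs_QBC_add_hs_QOT_le {τ : Mat (Fin 2 × Fin 2 × Fin 3 × Fin 2)} (hτ : τ.PosSemidef)
    (hρ : trCG τ = trB_psi (outer psiBC)) : (hs τ QBC + hs τ QOT).re ≤ 3 / 4 := by
  have hslice (k) : (slice k τ).PosSemidef := hτ.submatrix _
  have hker (k) : slice k τ *ᵥ (Pi.single (0, 2) 1 - Pi.single (1, 2) 1) = 0 :=
    PosSemidef.mulVec_eq_zero_of_sum_mulVec_eq_zero hslice
      (by rw [← trCG_eq_sum_slice, hρ, trB_psiBC_mulVec_eq_zero]) k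
  calc (hs τ QBC + hs τ QOT).re
      = ∑ k, ∑ p, if p.1 = k.2 then (slice k τ p p).re else 0 := re_hs_QBC_add_hs_QOT τ
    _ ≤ ∑ k, ∑ p, cheatWeight p.2 * (slice k τ p p).re :=
      Finset.sum_le_sum fun k _ => sum_re_diag_le_cheatWeight (hslice k) (hker k) k.2
    _ = ∑ p, cheatWeight p.2 * (trCG τ p p).re := by
      simp only [trCG_eq_sum_slice, Matrix.sum_apply, Complex.re_sum, Finset.mul_sum]
      exact Finset.sum_comm
    _ = 3 / 4 := by rw [hρ, sum_cheatWeight_mul_trB_psiBC]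

def cheatState : Mat (Fin 2 × Fin 2 × Fin 3 × Fin 2) :=
  let u₀ : Fin 2 × Fin 2 × Fin 3 × Fin 2 → ℂ := Pi.single (0, 0, 0, 0) (1 / 2)
  let u₁ : Fin 2 × Fin 2 × Fin 3 × Fin 2 → ℂ := Pi.single (0, 1, 1, 1) (1 / 2)
  let u₂ : Fin 2 × Fin 2 × Fin 3 × Fin 2 → ℂ :=
    Pi.single (0, 0, 2, 0) (1 / 2) + Pi.single (0, 1, 2, 0) (1 / 2)
  vecMulVec u₀ (star u₀) + vecMulVec u₁ (star u₁) + vecMulVec u₂ (star u₂)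

theorem cheatState_posSemidef : cheatState.PosSemidef :=
  ((posSemidef_vecMulVec_self_star _).add (posSemidef_vecMulVec_self_star _)).add
    (posSemidef_vecMulVec_self_star _)

theorem trCG_cheatState : trCG cheatState = trB_psi (outer psiBC) := by
  ext p q
  fin_cases p <;> fin_cases q <;>
    simp [trCG, cheatState, vecMulVec, trB_psi, outer, psiBC_apply, Fin.sum_univ_three, f23,
      Pi.single_apply, map_ofNat]

theorem re_hs_QBC_add_hs_QOT_cheatState : (hs cheatState QBC + hs cheatState QOT).re = 3 / 4 := by
  rw [re_hs_QBC_add_hs_QOT]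
  simp [slice, splitCG, cheatState, vecMulVec, Fintype.sum_prod_type, Fin.sum_univ_three,
    Pi.single_apply]
  norm_num

theorem bc_ot_switch_cheating_Bob :
    IsGreatest
      {x : ℝ | ∃ τ : Mat (Fin 2 × Fin 2 × Fin 3 × Fin 2),
        IsDensity τ ∧ trCG τ = trB_psi (outer psiBC) ∧
        x = (hs τ QBC + hs τ QOT).re}
      (3/4) := by
  refine ⟨⟨cheatState, ⟨cheatState_posSemidef, ?_⟩, trCG_cheatState,
    re_hs_QBC_add_hs_QOT_cheatState.symm⟩, ?_⟩
  · rw [← trace_trCG, trCG_cheatState, trace_trB_psiBC]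
  · rintro x ⟨τ, ⟨hτ, -⟩, hρ, rfl⟩
    exact re_hs_QBC_add_hs_QOT_le hτ hρ
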